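/- The function f_k from the paper is invariant under independent translation of the points with odd index: for any v ∈ ℝ² and points z_1,…,z_{2k} ∈ ℝ², defining f_k(z_1,…,z_{2k}) = Σ_{i=1}^{2k} ω(z_i, z_{i+1}) with indices read cyclically, one has f_k(z_1+v, z_2, z_3+v, z_4, …, z_{2k-1}+v, z_{2k}) = f_k(z_1,…,z_{2k}). -/

import Mathlib

/-!
Moving the points of even index (counted from `0`, as in `Fin (2 * k)`) by `v` changes the term
`ω(z_i, z_{i+1})` by `ω(v, z_{i+1})` when `i` is even and by `ω(z_i, v) = -ω(v, z_i)` when `i` is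
odd, since consecutive indices of a cycle of even length have opposite parity. With
`h j = ω(v, z_j)` for odd `j` and `0` otherwise, both cases read `h(i+1) - h(i)`, so the total
change telescopes to zero around the cycle.
-/

/-- The standard symplectic form on `ℝ²`. -/
def omega (p q : ℝ × ℝ) : ℝ := p.1 * q.2 - p.2 * q.1

/-- The cyclic sum `f_k(z_1,…,z_{2k}) = Σ ω(z_i, z_{i+1})`, indices read
cyclically modulo `2k`. -/
def fk (k : ℕ) (z : Fin (2 * k) → ℝ × ℝ) : ℝ :=
  ∑ i : Fin (2 * k), omega (z i) (z ⟨((i : ℕ) + 1) % (2 * k), Nat.mod_lt _ i.pos⟩)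

lemma omega_add_left (x y w : ℝ × ℝ) : omega (x + y) w = omega x w + omega y w := by
  simp only [omega, Prod.fst_add, Prod.snd_add]; ring

lemma omega_add_right (w x y : ℝ × ℝ) : omega w (x + y) = omega w x + omega w y := by
  simp only [omega, Prod.fst_add, Prod.snd_add]; ring

lemma omega_swap (x y : ℝ × ℝ) : omega y x = -omega x y := by
  simp only [omega]; ring

theorem sum_omega_translate_of_alternating {ι : Type*} [Fintype ι] (σ : Equiv.Perm ι)
    (p : ι → Prop) [DecidablePred p] (hp : ∀ i, p (σ i) ↔ ¬p i) (z : ι → ℝ × ℝ) (v : ℝ × ℝ) :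
    ∑ i, omega (if p i then z i + v else z i) (if p (σ i) then z (σ i) + v else z (σ i)) =
      ∑ i, omega (z i) (z (σ i)) := by
  set h : ι → ℝ := fun j => if p j then 0 else omega v (z j)
  have hterm : ∀ i, omega (if p i then z i + v else z i)
      (if p (σ i) then z (σ i) + v else z (σ i)) = omega (z i) (z (σ i)) + (h (σ i) - h i) := by
    intro i
    by_cases hi : p i
    · have hσi : ¬p (σ i) := fun hσi => (hp i).mp hσi hi
      simp only [h, if_pos hi, if_neg hσi, omega_add_left]
      ring
    · simp only [h, if_neg hi, if_pos ((hp i).mpr hi), omega_add_right, omega_swap v (z i)]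
      ring
  rw [Finset.sum_congr rfl fun i _ => hterm i, Finset.sum_add_distrib, Finset.sum_sub_distrib,
    Equiv.sum_comp σ h, sub_self, add_zero]

lemma val_finRotate {n : ℕ} (i : Fin n) : (finRotate n i : ℕ) = (i + 1) % n := by
  cases n with
  | zero => exact i.elim0
  | succ n =>
    rw [coe_finRotate]
    split_ifs with hi
    · simp [hi]
    · rw [Nat.mod_eq_of_lt]
      exact Nat.succ_lt_succ (Fin.val_lt_last hi)

lemma even_val_finRotate_iff {n : ℕ} (hn : Even n) (i : Fin n) :
    Even (finRotate n i : ℕ) ↔ ¬Even (i : ℕ) := by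
  rw [val_finRotate, Nat.even_iff, Nat.mod_mod_of_dvd _ (even_iff_two_dvd.mp hn), ← Nat.even_iff,
    Nat.even_add_one]

lemma fk_eq_sum_finRotate (k : ℕ) (z : Fin (2 * k) → ℝ × ℝ) :
    fk k z = ∑ i, omega (z i) (z (finRotate _ i)) := by
  unfold fk
  refine Finset.sum_congr rfl fun i _ => congrArg (omega (z i) <| z ·) ?_
  exact Fin.ext (val_finRotate i).symm

theorem fk_translation_invariant_general (k : ℕ)
    (z : Fin (2 * k) → ℝ × ℝ) (v : ℝ × ℝ) :
    fk k (fun i => if Even (i : ℕ) then z i + v else z i) = fk k z := by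
  rw [fk_eq_sum_finRotate, fk_eq_sum_finRotate]
  exact sum_omega_translate_of_alternating _ _ (even_val_finRotate_iff (even_two_mul k)) z v

/-- `f_k` is invariant under translating every other point by a fixed
vector `v`. -/
theorem fk_translation_invariant (k : ℕ) (hk : 1 ≤ k)
    (z : Fin (2 * k) → ℝ × ℝ) (v : ℝ × ℝ) :
    fk k (fun i => if Even (i : ℕ) then z i + v else z i) = fk k z :=
  fk_translation_invariant_general k z v
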